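/- Let χ be a primitive Dirichlet character mod q, let h be a positive integer, and let α, β, γ, δ, s be complex numbers with |Re α|, |Re β|, |Re γ|, |Re δ| < 1/4 and Re s > −1/2, and assume p^{γ} ≠ p^{δ} for every prime p | h. Then for every prime p | h the series Σ_{j≥0} χ(p)^j σ_{α,β}(p^j) σ_{γ,δ}(p^{h_p+j}) p^{−j(1+s)} and Σ_{j≥0} χ(p)^j σ_{α,β}(p^j) σ_{γ,δ}(p^j) p^{−j(1+s)} converge absolutely, the latter is nonzero, and B′_{α,β,γ,δ,h}(s,χ) := ∏_{p|h} [Σ_{j≥0} χ(p)^j σ_{α,β}(p^j) σ_{γ,δ}(p^{h_p+j}) p^{−j(1+s)}]/[Σ_{j≥0} χ(p)^j σ_{α,β}(p^j) σ_{γ,δ}(p^j) p^{−j(1+s)}] = ∏_{p|h} (B′⁰ − p^{−1}B′¹ + p^{−2}B′²)/[(p^{−γ} − p^{−δ})(1 − χ(p)² p^{−2−α−β−γ−δ−2s})], where (with m := h_p) B′⁰ = p^{−γ(m+1)} − p^{−δ(m+1)}, B′¹ = χ(p) p^{−γ−δ}(p^{−α} + p^{−β})(p^{−γm} − p^{−δm})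 p^{−s}, B′² = χ(p)² p^{−α−β−γ−δ}(p^{−δ−γm} − p^{−γ−δm}) p^{−2s}. -/

import Mathlib

open Complex MeasureTheory Filter Topology

noncomputable section

/-- `e_d(c) = exp(2πi c/d)`. -/
def eC (d : ℕ) (c : ℤ) : ℂ := Complex.exp (2 * Real.pi * Complex.I * c / d)

/-- The conjugate Dirichlet character. -/
def conjChar {q : ℕ} (χ : DirichletCharacter ℂ q) : DirichletCharacter ℂ q :=
  χ.ringHomComp (starRingEnd ℂ)

/-- Gauss sum `G(χ) = Σ_{m=1}^{q} χ(m) e_q(m)` (here summed over `m < q`, which is the same). -/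
def gaussC {q : ℕ} (χ : DirichletCharacter ℂ q) : ℂ :=
  ∑ m ∈ Finset.range q, χ (m : ZMod q) * eC q m

/-- `f_{α,β}(n,χ) = Σ_{n₁n₂=n} n₁^{-α} n₂^{-β} χ(n₂)`. -/
def fab {q : ℕ} (χ : DirichletCharacter ℂ q) (α β : ℂ) (n : ℕ) : ℂ :=
  ∑ d ∈ n.divisors, ((n / d : ℕ) : ℂ) ^ (-α) * (d : ℂ) ^ (-β) * χ (d : ZMod q)

/-- `σ_{α,β}(n) = Σ_{n₁n₂=n} n₁^{-α} n₂^{-β}`. -/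
def sigmaab (α β : ℂ) (n : ℕ) : ℂ :=
  ∑ d ∈ n.divisors, ((n / d : ℕ) : ℂ) ^ (-α) * (d : ℂ) ^ (-β)

/-- the `q`-part `n(q)` of `n`. -/
def qPart (q n : ℕ) : ℕ := ∏ p ∈ n.primeFactors.filter (· ∣ q), p ^ (n.factorization p)

/-- local Euler factor quotient `B_{α,β,γ,δ,h}(s)`, with `χ₁` attached to `(α,β)` and
`χ₂` attached to `(γ,δ)` (the shifted one). -/
def Bh {q : ℕ} (χ₁ χ₂ : DirichletCharacter ℂ q) (α β γ δ : ℂ) (h : ℕ) (s : ℂ) : ℂ :=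
  ∏ p ∈ h.primeFactors,
    (∑' j : ℕ, fab χ₁ α β (p ^ j) * fab χ₂ γ δ (p ^ (h.factorization p + j)) *
        (p : ℂ) ^ (-((j : ℂ) * (1 + s)))) /
    (∑' j : ℕ, fab χ₁ α β (p ^ j) * fab χ₂ γ δ (p ^ j) * (p : ℂ) ^ (-((j : ℂ) * (1 + s))))

/-- `B_{α,β,γ,δ,h,k}(s) = B_{α,β,γ,δ,h}(s,χ̄) B_{γ,δ,α,β,k}(s,χ)`. -/
def Bfull {q : ℕ} (χ : DirichletCharacter ℂ q) (α β γ δ : ℂ) (h k : ℕ) (s : ℂ) : ℂ :=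
  Bh χ (conjChar χ) α β γ δ h s * Bh (conjChar χ) χ γ δ α β k s

/-- `A_{α,β,γ,δ}(s)`. -/
def Az {q : ℕ} [NeZero q] (χ : DirichletCharacter ℂ q) (α β γ δ : ℂ) (s : ℂ) : ℂ :=
  riemannZeta (1 + α + γ + s) * riemannZeta (1 + β + δ + s) *
    DirichletCharacter.LFunction χ (1 + β + γ + s) *
    DirichletCharacter.LFunction (conjChar χ) (1 + α + δ + s) /
    riemannZeta (2 + α + β + γ + δ + 2 * s) *
    ∏ p ∈ q.primeFactors,
      (1 - (p : ℂ) ^ (-1 - s - β - δ)) / (1 - (p : ℂ) ^ (-2 - 2 * s - α - β - γ - δ))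

/-- `Z_{α,β,γ,δ,h,k}(s) = A_{α,β,γ,δ}(s) B_{α,β,γ,δ,h,k}(s)`. -/
def Zfull {q : ℕ} [NeZero q] (χ : DirichletCharacter ℂ q) (α β γ δ : ℂ) (h k : ℕ) (s : ℂ) : ℂ :=
  Az χ α β γ δ s * Bfull χ α β γ δ h k s

/-- `A′_{α,β,γ,δ}(s,χ)`. -/
def A'z {q : ℕ} [NeZero q] (χ : DirichletCharacter ℂ q) (α β γ δ : ℂ) (s : ℂ) : ℂ :=
  DirichletCharacter.LFunction χ (1 + α + γ + s) * DirichletCharacter.LFunction χ (1 + β + δ + s) *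
    DirichletCharacter.LFunction χ (1 + α + δ + s) * DirichletCharacter.LFunction χ (1 + β + γ + s) /
    DirichletCharacter.LFunction (χ ^ 2) (2 + α + β + γ + δ + 2 * s)

/-- `B′_{α,β,γ,δ,h}(s,χ)`. -/
def B'h {q : ℕ} (χ : DirichletCharacter ℂ q) (α β γ δ : ℂ) (h : ℕ) (s : ℂ) : ℂ :=
  ∏ p ∈ h.primeFactors,
    (∑' j : ℕ, (χ (p : ZMod q)) ^ j * sigmaab α β (p ^ j) * sigmaab γ δ (p ^ (h.factorization p + j)) *
        (p : ℂ) ^ (-((j : ℂ) * (1 + s)))) /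
    (∑' j : ℕ, (χ (p : ZMod q)) ^ j * sigmaab α β (p ^ j) * sigmaab γ δ (p ^ j) *
        (p : ℂ) ^ (-((j : ℂ) * (1 + s))))

/-- `B′_{α,β,γ,δ,h,k}(s,χ) = B′_{α,β,γ,δ,h}(s,χ) B′_{γ,δ,α,β,k}(s,χ)`. -/
def B'full {q : ℕ} (χ : DirichletCharacter ℂ q) (α β γ δ : ℂ) (h k : ℕ) (s : ℂ) : ℂ :=
  B'h χ α β γ δ h s * B'h χ γ δ α β k s

/-- `Z′_{α,β,γ,δ,h,k}(s,χ) = conj(G(χ)) A′_{α,β,γ,δ}(s,χ) B′_{α,β,γ,δ,h,k}(s,χ)`. -/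
def Z'full {q : ℕ} [NeZero q] (χ : DirichletCharacter ℂ q) (α β γ δ : ℂ) (h k : ℕ) (s : ℂ) : ℂ :=
  (starRingEnd ℂ) (gaussC χ) * A'z χ α β γ δ s * B'full χ α β γ δ h k s

/-- `𝔞 = 0` if `χ(-1) = 1`, else `1`. -/
def frakA {q : ℕ} (χ : DirichletCharacter ℂ q) : ℕ := if χ (-1) = 1 then 0 else 1

/-- the Gamma-factor ratio `g_{α,β,γ,δ}(s,t)`. -/
def gfun {q : ℕ} (χ : DirichletCharacter ℂ q) (α β γ δ : ℂ) (s : ℂ) (t : ℝ) : ℂ :=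
  (Complex.Gamma ((1 / 2 + α + s + Complex.I * t) / 2) *
      Complex.Gamma ((1 / 2 + β + s + Complex.I * t + (frakA χ : ℂ)) / 2) *
      Complex.Gamma ((1 / 2 + γ + s - Complex.I * t) / 2) *
      Complex.Gamma ((1 / 2 + δ + s - Complex.I * t + (frakA χ : ℂ)) / 2)) /
    (Complex.Gamma ((1 / 2 + α + Complex.I * t) / 2) *
      Complex.Gamma ((1 / 2 + β + Complex.I * t + (frakA χ : ℂ)) / 2) *
      Complex.Gamma ((1 / 2 + γ - Complex.I * t) / 2) *
      Complex.Gamma ((1 / 2 + δ - Complex.I * t + (frakA χ : ℂ)) / 2))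

/-- `X_{α,β,γ,δ,t}`. -/
def Xfun {q : ℕ} (χ : DirichletCharacter ℂ q) (α β γ δ : ℂ) (t : ℝ) : ℂ :=
  (Real.pi : ℂ) ^ (α + β + γ + δ) * (q : ℂ) ^ (-β - δ) *
    (Complex.Gamma ((1 / 2 - α - Complex.I * t) / 2) *
      Complex.Gamma ((1 / 2 - β - Complex.I * t + (frakA χ : ℂ)) / 2) *
      Complex.Gamma ((1 / 2 - γ + Complex.I * t) / 2) *
      Complex.Gamma ((1 / 2 - δ + Complex.I * t + (frakA χ : ℂ)) / 2)) /
    (Complex.Gamma ((1 / 2 + α + Complex.I * t) / 2) *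
      Complex.Gamma ((1 / 2 + β + Complex.I * t + (frakA χ : ℂ)) / 2) *
      Complex.Gamma ((1 / 2 + γ - Complex.I * t) / 2) *
      Complex.Gamma ((1 / 2 + δ - Complex.I * t + (frakA χ : ℂ)) / 2))

/-- `V_{α,β,γ,δ,t}(x)`, as the contour integral along `Re s = 1`. -/
def Vfun {q : ℕ} (χ : DirichletCharacter ℂ q) (α β γ δ : ℂ) (G : ℂ → ℂ) (t : ℝ) (x : ℝ) : ℂ :=
  (1 / (2 * Real.pi)) *
    ∫ u : ℝ, G (1 + Complex.I * u) / (1 + Complex.I * u) *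
      gfun χ α β γ δ (1 + Complex.I * u) t * (x : ℂ) ^ (-(1 + Complex.I * u))

/-- the Ramanujan sum `c_d(r)`. -/
def cdR (d r : ℕ) : ℂ :=
  ∑ c ∈ (Finset.Icc 1 d).filter (fun c => Nat.gcd c d = 1), eC d (c * r)

/-- the twisted Ramanujan-type sum `c_d(r,χ) = Σ_{(c,d)=1} χ(c) e_d(-cr)`. -/
def cdChi {q : ℕ} (χ : DirichletCharacter ℂ q) (d r : ℕ) : ℂ :=
  ∑ c ∈ (Finset.Icc 1 d).filter (fun c => Nat.gcd c d = 1),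
    χ (c : ZMod q) * eC d (-((c : ℤ) * r))

/-- `σ_{α,β}(n, a/d, χ)`. -/
def sigmaE {q : ℕ} (χ : DirichletCharacter ℂ q) (α β : ℂ) (d : ℕ) (a : ℤ) (n : ℕ) : ℂ :=
  ∑ u ∈ n.divisors, (u : ℂ) ^ (-α) * ((n / u : ℕ) : ℂ) ^ (-β) *
    ∑ b ∈ Finset.Icc 1 (Nat.lcm d q),
      if ((b : ℕ) : ZMod d) = ((a * u : ℤ) : ZMod d)
      then χ (b : ZMod q) * eC (Nat.lcm d q) b else 0

/-- local factor `C_{11,α,β,γ,δ,h}(s,ψ)`. -/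
def C11h {q : ℕ} (ψ : DirichletCharacter ℂ q) (α β γ δ : ℂ) (h : ℕ) (s : ℂ) : ℂ :=
  ∏ p ∈ h.primeFactors.filter (fun p => ¬ p ∣ q),
    (let m : ℕ := h.factorization p
     ((1 - ψ (p : ZMod q) ^ (m + 1) * (p : ℂ) ^ (-(((m : ℂ) + 1) * (α + δ + 2 * s))))
      - (p : ℂ) ^ (-1 : ℂ) *
        ((ψ (p : ZMod q) * (p : ℂ) ^ (γ - δ) + (p : ℂ) ^ (-β - δ - 2 * s)) *
          (1 - ψ (p : ZMod q) ^ m * (p : ℂ) ^ (-((m : ℂ) * (α + δ + 2 * s)))))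
      + (p : ℂ) ^ (-2 : ℂ) *
        (ψ (p : ZMod q) * (p : ℂ) ^ (-β + γ - 2 * δ - 2 * s)
          - ψ (p : ZMod q) ^ m * (p : ℂ) ^ (-((m : ℂ) * (α + δ + 2 * s))) * (p : ℂ) ^ (α - β + γ - δ))) /
     ((1 - ψ (p : ZMod q) * (p : ℂ) ^ (-α - δ - 2 * s)) * (1 - (p : ℂ) ^ (-2 + α - β + γ - δ))))

/-- `C_{11,α,β,γ,δ,h,k}(s)`. -/
def C11full {q : ℕ} (χ : DirichletCharacter ℂ q) (α β γ δ : ℂ) (h k : ℕ) (s : ℂ) : ℂ :=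
  C11h (conjChar χ) α β γ δ h s * C11h χ γ δ α β k s

/-- local factor `C_{22,α,β,γ,δ,h}(s,ψ)`. -/
def C22h {q : ℕ} (ψ : DirichletCharacter ℂ q) (α β γ δ : ℂ) (h : ℕ) (s : ℂ) : ℂ :=
  ∏ p ∈ h.primeFactors.filter (fun p => ¬ p ∣ q),
    (let m : ℕ := h.factorization p
     (((p : ℂ) ^ (-((m : ℂ) * (β + γ + 2 * s))) - ψ (p : ZMod q) ^ (m + 1) * (p : ℂ) ^ (β + γ + 2 * s))
      - (p : ℂ) ^ (-1 : ℂ) *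
        (((p : ℂ) ^ (-((m : ℂ) * (β + γ + 2 * s))) - ψ (p : ZMod q) ^ m) *
          ((p : ℂ) ^ (β + δ + 2 * s) + ψ (p : ZMod q) * (p : ℂ) ^ (-α + β)))
      + (p : ℂ) ^ (-2 : ℂ) *
        ((p : ℂ) ^ (-((m : ℂ) * (β + γ + 2 * s))) * ψ (p : ZMod q) * (p : ℂ) ^ (-α + 2 * β + δ + 2 * s)
          - ψ (p : ZMod q) ^ m * (p : ℂ) ^ (-α + β - γ + δ))) /
     ((1 - ψ (p : ZMod q) * (p : ℂ) ^ (β + γ + 2 * s)) * (1 - (p : ℂ) ^ (-2 - α + β - γ + δ))))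

/-- `C_{22,α,β,γ,δ,h,k}(s)`. -/
def C22full {q : ℕ} (χ : DirichletCharacter ℂ q) (α β γ δ : ℂ) (h k : ℕ) (s : ℂ) : ℂ :=
  (qPart q h : ℂ) ^ (-β - γ - 2 * s) * (qPart q k : ℂ) ^ (-α - δ - 2 * s) *
    C22h (conjChar χ) α β γ δ h s * C22h χ γ δ α β k s

/-- local factor `C_{12,α,β,γ,δ,h}(s)`. -/
def C12h {q : ℕ} (χ : DirichletCharacter ℂ q) (α β γ δ : ℂ) (h : ℕ) (s : ℂ) : ℂ :=
  ∏ p ∈ h.primeFactors.filter (fun p => ¬ p ∣ q),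
    (let m : ℕ := h.factorization p
     ((1 - (p : ℂ) ^ (-(((m : ℂ) + 1) * (α + γ + 2 * s))))
      - (p : ℂ) ^ (-1 : ℂ) *
        (χ (p : ZMod q) * ((p : ℂ) ^ (δ - γ) + (p : ℂ) ^ (-β - γ - 2 * s)) *
          (1 - (p : ℂ) ^ (-((m : ℂ) * (α + γ + 2 * s)))))
      + (p : ℂ) ^ (-2 : ℂ) *
        (χ (p : ZMod q) ^ 2 * (p : ℂ) ^ (δ - β) *
          ((p : ℂ) ^ (-(2 * (γ + s))) - (p : ℂ) ^ (2 * (α + s)) * (p : ℂ) ^ (-(((m : ℂ) + 1) * (α + γ + 2 * s)))))) /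
     ((1 - (p : ℂ) ^ (-α - γ - 2 * s)) * (1 - χ (p : ZMod q) ^ 2 * (p : ℂ) ^ (-2 + α - β - γ + δ))))

/-- `C_{12,α,β,γ,δ,h,k}(s) = C_{12,α,β,γ,δ,h}(s) C_{12,δ,γ,β,α,k}(s)`. -/
def C12full {q : ℕ} (χ : DirichletCharacter ℂ q) (α β γ δ : ℂ) (h k : ℕ) (s : ℂ) : ℂ :=
  C12h χ α β γ δ h s * C12h χ δ γ β α k s

end

lemma cast_pow_cpow (p k : ℕ) (w : ℂ) : ((p ^ k : ℕ) : ℂ) ^ w = ((p : ℂ) ^ w) ^ k := by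
  push_cast
  rw [← Complex.natCast_cpow_natCast_mul, Complex.cpow_nat_mul]

lemma sigmaab_prime_pow {p : ℕ} (hp : p.Prime) (α β : ℂ) (n : ℕ) :
    sigmaab α β (p ^ n)
      = ∑ i ∈ Finset.range (n + 1), ((p : ℂ) ^ (-α)) ^ (n - i) * ((p : ℂ) ^ (-β)) ^ i := by
  rw [sigmaab, Nat.sum_divisors_prime_pow hp]
  refine Finset.sum_congr rfl fun i hi => ?_
  rw [Finset.mem_range] at hi
  rw [Nat.pow_div (by omega) hp.pos, cast_pow_cpow, cast_pow_cpow]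

lemma geom_closed {c d : ℂ} (hcd : c ≠ d) (n : ℕ) :
    ∑ i ∈ Finset.range (n + 1), c ^ (n - i) * d ^ i = (c ^ (n + 1) - d ^ (n + 1)) / (c - d) := by
  rw [eq_div_iff (sub_ne_zero.mpr hcd), ← geom_sum₂_mul c d (n + 1)]
  congr 1
  rw [← Finset.sum_range_reflect]
  refine Finset.sum_congr rfl fun i hi => ?_
  rw [Finset.mem_range] at hi
  congr 2
  omega

lemma one_sub_ne {z : ℂ} (hz : ‖z‖ < 1) : 1 - z ≠ 0 := by
  intro h
  rw [sub_eq_zero] at h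
  rw [← h] at hz
  simp at hz

lemma geom_cauchy {a b t : ℂ} (ha : ‖a * t‖ < 1) (hb : ‖b * t‖ < 1) :
    Summable (fun j : ℕ => (∑ i ∈ Finset.range (j + 1), a ^ (j - i) * b ^ i) * t ^ j) ∧
    (∑' j : ℕ, (∑ i ∈ Finset.range (j + 1), a ^ (j - i) * b ^ i) * t ^ j)
      = (1 - a * t)⁻¹ * (1 - b * t)⁻¹ := by
  have hfa : Summable fun i : ℕ => ‖(b * t) ^ i‖ := by
    simpa [norm_pow] using summable_geometric_of_lt_one (norm_nonneg _) hb
  have hfb : Summable fun i : ℕ => ‖(a * t) ^ i‖ := by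
    simpa [norm_pow] using summable_geometric_of_lt_one (norm_nonneg _) ha
  have hEq : ∀ j : ℕ, (∑ i ∈ Finset.range (j + 1), a ^ (j - i) * b ^ i) * t ^ j
      = ∑ k ∈ Finset.range (j + 1), (b * t) ^ k * (a * t) ^ (j - k) := by
    intro j
    rw [Finset.sum_mul]
    refine Finset.sum_congr rfl fun i hi => ?_
    rw [Finset.mem_range] at hi
    have h : i ≤ j := by omega
    rw [mul_pow, mul_pow, ← pow_sub_mul_pow t h]
    ring
  constructor
  · exact ((summable_norm_sum_mul_range_of_summable_norm hfa hfb).of_norm).congr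
      (fun j => (hEq j).symm)
  · rw [tsum_congr hEq, ← tsum_mul_tsum_eq_tsum_sum_range_of_summable_norm hfa hfb,
      tsum_geometric_of_norm_lt_one hb, tsum_geometric_of_norm_lt_one ha]
    ring

lemma key_sum {a b c d x : ℂ} (hcd : c ≠ d)
    (h1 : ‖a * (c * x)‖ < 1) (h2 : ‖b * (c * x)‖ < 1)
    (h3 : ‖a * (d * x)‖ < 1) (h4 : ‖b * (d * x)‖ < 1) (m : ℕ) :
    Summable (fun j : ℕ => (∑ i ∈ Finset.range (j + 1), a ^ (j - i) * b ^ i) *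
      ((c ^ (m + j + 1) - d ^ (m + j + 1)) / (c - d)) * x ^ j) ∧
    (∑' j : ℕ, (∑ i ∈ Finset.range (j + 1), a ^ (j - i) * b ^ i) *
      ((c ^ (m + j + 1) - d ^ (m + j + 1)) / (c - d)) * x ^ j)
      = (c - d)⁻¹ * (c ^ (m + 1) * ((1 - a * (c * x))⁻¹ * (1 - b * (c * x))⁻¹)
          - d ^ (m + 1) * ((1 - a * (d * x))⁻¹ * (1 - b * (d * x))⁻¹)) := by
  obtain ⟨Sc, Tc⟩ := geom_cauchy h1 h2
  obtain ⟨Sd, Td⟩ := geom_cauchy h3 h4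
  have hcd' : c - d ≠ 0 := sub_ne_zero.mpr hcd
  have hfun : ∀ j : ℕ, (∑ i ∈ Finset.range (j + 1), a ^ (j - i) * b ^ i) *
      ((c ^ (m + j + 1) - d ^ (m + j + 1)) / (c - d)) * x ^ j
      = (c - d)⁻¹ * (c ^ (m + 1) *
          ((∑ i ∈ Finset.range (j + 1), a ^ (j - i) * b ^ i) * (c * x) ^ j)
        - d ^ (m + 1) * ((∑ i ∈ Finset.range (j + 1), a ^ (j - i) * b ^ i) * (d * x) ^ j)) := by
    intro j
    field_simp
    ring
  constructor
  · exact (((Sc.mul_left _).sub (Sd.mul_left _)).mul_left _).congr (fun j => (hfun j).symm)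
  · rw [tsum_congr hfun, tsum_mul_left,
      Summable.tsum_sub (Sc.mul_left _) (Sd.mul_left _), tsum_mul_left, tsum_mul_left, Tc, Td]

lemma Dalt {a b c d x : ℂ} (hcd : c ≠ d)
    (h1 : ‖a * (c * x)‖ < 1) (h2 : ‖b * (c * x)‖ < 1)
    (h3 : ‖a * (d * x)‖ < 1) (h4 : ‖b * (d * x)‖ < 1)
    (h5 : ‖a * b * (c * (d * (x * x)))‖ < 1) :
    (c - d)⁻¹ * (c ^ (0 + 1) * ((1 - a * (c * x))⁻¹ * (1 - b * (c * x))⁻¹)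
        - d ^ (0 + 1) * ((1 - a * (d * x))⁻¹ * (1 - b * (d * x))⁻¹)) ≠ 0 := by
  have hcd' : c - d ≠ 0 := sub_ne_zero.mpr hcd
  have hu1 : 1 - a * (c * x) ≠ 0 := one_sub_ne h1
  have hu2 : 1 - b * (c * x) ≠ 0 := one_sub_ne h2
  have hu3 : 1 - a * (d * x) ≠ 0 := one_sub_ne h3
  have hu4 : 1 - b * (d * x) ≠ 0 := one_sub_ne h4
  have hu5 : 1 - a * b * (c * (d * (x * x))) ≠ 0 := one_sub_ne h5
  have hDalt : (c - d)⁻¹ * (c ^ (0 + 1) * ((1 - a * (c * x))⁻¹ * (1 - b * (c * x))⁻¹)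
        - d ^ (0 + 1) * ((1 - a * (d * x))⁻¹ * (1 - b * (d * x))⁻¹))
      = (1 - a * b * (c * (d * (x * x)))) *
        ((1 - a * (c * x)) * (1 - b * (c * x)) * (1 - a * (d * x)) * (1 - b * (d * x)))⁻¹ := by
    generalize hA1 : 1 - a * (c * x) = A1 at *
    generalize hA2 : 1 - b * (c * x) = A2 at *
    generalize hA3 : 1 - a * (d * x) = A3 at *
    generalize hA4 : 1 - b * (d * x) = A4 at *
    generalize hA5 : c - d = A5 at *
    field_simp
    subst hA1 hA2 hA3 hA4 hA5
    ring
  rw [hDalt]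
  exact mul_ne_zero hu5 (inv_ne_zero (mul_ne_zero (mul_ne_zero (mul_ne_zero hu1 hu2) hu3) hu4))

lemma final_alg {a b c d x : ℂ} (hcd : c ≠ d)
    (h1 : ‖a * (c * x)‖ < 1) (h2 : ‖b * (c * x)‖ < 1)
    (h3 : ‖a * (d * x)‖ < 1) (h4 : ‖b * (d * x)‖ < 1)
    (h5 : ‖a * b * (c * (d * (x * x)))‖ < 1) (m : ℕ) :
    ((c - d)⁻¹ * (c ^ (m + 1) * ((1 - a * (c * x))⁻¹ * (1 - b * (c * x))⁻¹)
        - d ^ (m + 1) * ((1 - a * (d * x))⁻¹ * (1 - b * (d * x))⁻¹))) /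
    ((c - d)⁻¹ * (c ^ (0 + 1) * ((1 - a * (c * x))⁻¹ * (1 - b * (c * x))⁻¹)
        - d ^ (0 + 1) * ((1 - a * (d * x))⁻¹ * (1 - b * (d * x))⁻¹)))
    = ((c ^ (m + 1) - d ^ (m + 1))
        - c * d * (a + b) * (c ^ m - d ^ m) * x
        + a * b * c * d * (d * c ^ m - c * d ^ m) * (x * x))
      / ((c - d) * (1 - a * b * (c * (d * (x * x))))) := by
  have hcd' : c - d ≠ 0 := sub_ne_zero.mpr hcd
  have hu1 : 1 - a * (c * x) ≠ 0 := one_sub_ne h1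
  have hu2 : 1 - b * (c * x) ≠ 0 := one_sub_ne h2
  have hu3 : 1 - a * (d * x) ≠ 0 := one_sub_ne h3
  have hu4 : 1 - b * (d * x) ≠ 0 := one_sub_ne h4
  have hu5 : 1 - a * b * (c * (d * (x * x))) ≠ 0 := one_sub_ne h5
  rw [div_eq_div_iff (Dalt hcd h1 h2 h3 h4 h5) (mul_ne_zero hcd' hu5)]
  generalize hA1 : 1 - a * (c * x) = A1 at *
  generalize hA2 : 1 - b * (c * x) = A2 at *
  generalize hA3 : 1 - a * (d * x) = A3 at *
  generalize hA4 : 1 - b * (d * x) = A4 at *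
  generalize hA5 : c - d = A5 at *
  field_simp
  subst hA1 hA2 hA3 hA4 hA5
  ring

lemma pbgen {p : ℕ} (hp : 1 < p) {Y z : ℂ} (hY : ‖Y‖ ≤ 1) {E : ℝ}
    (hz : ‖z‖ = (p : ℝ) ^ E) (hE : E < 0) : ‖Y * z‖ < 1 := by
  have hp1 : (1 : ℝ) < (p : ℝ) := by exact_mod_cast hp
  have hlt : (p : ℝ) ^ E < 1 := Real.rpow_lt_one_of_one_lt_of_neg hp1 hE
  have h0 : (0 : ℝ) ≤ (p : ℝ) ^ E := (Real.rpow_pos_of_pos (by linarith) E).le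
  calc ‖Y * z‖ = ‖Y‖ * ‖z‖ := norm_mul _ _
    _ ≤ ‖z‖ := mul_le_of_le_one_left (norm_nonneg _) hY
    _ = (p : ℝ) ^ E := hz
    _ < 1 := hlt

lemma master {q : ℕ} (χ : DirichletCharacter ℂ q) {p : ℕ} (hp : p.Prime)
    {α β γ δ s : ℂ}
    (hα : |α.re| < 1 / 4) (hβ : |β.re| < 1 / 4) (hγ : |γ.re| < 1 / 4) (hδ : |δ.re| < 1 / 4)
    (hs : -(1 / 2 : ℝ) < s.re)
    (hnd : (p : ℂ) ^ γ ≠ (p : ℂ) ^ δ) (m : ℕ) :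
    Summable (fun j : ℕ => (χ (p : ZMod q)) ^ j * sigmaab α β (p ^ j) *
        sigmaab γ δ (p ^ (m + j)) * (p : ℂ) ^ (-((j : ℂ) * (1 + s)))) ∧
    Summable (fun j : ℕ => (χ (p : ZMod q)) ^ j * sigmaab α β (p ^ j) *
        sigmaab γ δ (p ^ j) * (p : ℂ) ^ (-((j : ℂ) * (1 + s)))) ∧
    (∑' j : ℕ, (χ (p : ZMod q)) ^ j * sigmaab α β (p ^ j) * sigmaab γ δ (p ^ j) *
        (p : ℂ) ^ (-((j : ℂ) * (1 + s)))) ≠ 0 ∧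
    (∑' j : ℕ, (χ (p : ZMod q)) ^ j * sigmaab α β (p ^ j) * sigmaab γ δ (p ^ (m + j)) *
        (p : ℂ) ^ (-((j : ℂ) * (1 + s)))) /
    (∑' j : ℕ, (χ (p : ZMod q)) ^ j * sigmaab α β (p ^ j) * sigmaab γ δ (p ^ j) *
        (p : ℂ) ^ (-((j : ℂ) * (1 + s))))
    = (((p : ℂ) ^ (-γ * ((m : ℂ) + 1)) - (p : ℂ) ^ (-δ * ((m : ℂ) + 1)))
        - (p : ℂ) ^ (-1 : ℂ) *
          (χ (p : ZMod q) * (p : ℂ) ^ (-γ - δ) * ((p : ℂ) ^ (-α) + (p : ℂ) ^ (-β)) *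
            ((p : ℂ) ^ (-γ * (m : ℂ)) - (p : ℂ) ^ (-δ * (m : ℂ))) * (p : ℂ) ^ (-s))
        + (p : ℂ) ^ (-2 : ℂ) *
          (χ (p : ZMod q) ^ 2 * (p : ℂ) ^ (-α - β - γ - δ) *
            ((p : ℂ) ^ (-δ - γ * (m : ℂ)) - (p : ℂ) ^ (-γ - δ * (m : ℂ))) *
            (p : ℂ) ^ (-(2 * s)))) /
      (((p : ℂ) ^ (-γ) - (p : ℂ) ^ (-δ)) *
        (1 - χ (p : ZMod q) ^ 2 * (p : ℂ) ^ (-2 - α - β - γ - δ - 2 * s))) := by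
  have hp1 : 1 < p := hp.one_lt
  have ppos : (0 : ℝ) < p := by exact_mod_cast hp.pos
  have hP : (p : ℂ) ≠ 0 := Nat.cast_ne_zero.mpr hp.pos.ne'
  have hnP : ∀ w : ℂ, ‖(p : ℂ) ^ w‖ = (p : ℝ) ^ w.re :=
    fun w => Complex.norm_natCast_cpow_of_pos hp.pos w
  have hcd : (p : ℂ) ^ (-γ) ≠ (p : ℂ) ^ (-δ) := by
    simp only [cpow_neg]
    exact fun hE => hnd (inv_injective hE)
  obtain ⟨rα1, rα2⟩ := abs_lt.mp hα
  obtain ⟨rβ1, rβ2⟩ := abs_lt.mp hβ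
  obtain ⟨rγ1, rγ2⟩ := abs_lt.mp hγ
  obtain ⟨rδ1, rδ2⟩ := abs_lt.mp hδ
  set X : ℂ := χ (p : ZMod q) with hX
  have hXle : ‖X‖ ≤ 1 := χ.norm_le_one _
  -- norm bounds
  have hz3 : ∀ u v : ℂ, ‖(p : ℂ) ^ u * ((p : ℂ) ^ v * (p : ℂ) ^ (-(1 + s)))‖
      = (p : ℝ) ^ (u.re + (v.re + (-(1 + s)).re)) := by
    intro u v
    rw [norm_mul, norm_mul, hnP, hnP, hnP, ← Real.rpow_add ppos, ← Real.rpow_add ppos]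
  have hre : (-(1 + s)).re = -(1 + s.re) := by simp
  have h1 : ‖(p:ℂ)^(-α) * ((p:ℂ)^(-γ) * (X * (p:ℂ)^(-(1+s))))‖ < 1 := by
    rw [show (p:ℂ)^(-α) * ((p:ℂ)^(-γ) * (X * (p:ℂ)^(-(1+s))))
        = X * ((p:ℂ)^(-α) * ((p:ℂ)^(-γ) * (p:ℂ)^(-(1+s)))) by ring]
    refine pbgen hp1 hXle (hz3 (-α) (-γ)) ?_
    rw [hre]; simp only [neg_re]; linarith
  have h2 : ‖(p:ℂ)^(-β) * ((p:ℂ)^(-γ) * (X * (p:ℂ)^(-(1+s))))‖ < 1 := by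
    rw [show (p:ℂ)^(-β) * ((p:ℂ)^(-γ) * (X * (p:ℂ)^(-(1+s))))
        = X * ((p:ℂ)^(-β) * ((p:ℂ)^(-γ) * (p:ℂ)^(-(1+s)))) by ring]
    refine pbgen hp1 hXle (hz3 (-β) (-γ)) ?_
    rw [hre]; simp only [neg_re]; linarith
  have h3 : ‖(p:ℂ)^(-α) * ((p:ℂ)^(-δ) * (X * (p:ℂ)^(-(1+s))))‖ < 1 := by
    rw [show (p:ℂ)^(-α) * ((p:ℂ)^(-δ) * (X * (p:ℂ)^(-(1+s))))
        = X * ((p:ℂ)^(-α) * ((p:ℂ)^(-δ) * (p:ℂ)^(-(1+s)))) by ring]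
    refine pbgen hp1 hXle (hz3 (-α) (-δ)) ?_
    rw [hre]; simp only [neg_re]; linarith
  have h4 : ‖(p:ℂ)^(-β) * ((p:ℂ)^(-δ) * (X * (p:ℂ)^(-(1+s))))‖ < 1 := by
    rw [show (p:ℂ)^(-β) * ((p:ℂ)^(-δ) * (X * (p:ℂ)^(-(1+s))))
        = X * ((p:ℂ)^(-β) * ((p:ℂ)^(-δ) * (p:ℂ)^(-(1+s)))) by ring]
    refine pbgen hp1 hXle (hz3 (-β) (-δ)) ?_
    rw [hre]; simp only [neg_re]; linarith
  have h5 : ‖(p:ℂ)^(-α) * (p:ℂ)^(-β) *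
      ((p:ℂ)^(-γ) * ((p:ℂ)^(-δ) * ((X * (p:ℂ)^(-(1+s))) * (X * (p:ℂ)^(-(1+s))))))‖ < 1 := by
    rw [show (p:ℂ)^(-α) * (p:ℂ)^(-β) *
        ((p:ℂ)^(-γ) * ((p:ℂ)^(-δ) * ((X * (p:ℂ)^(-(1+s))) * (X * (p:ℂ)^(-(1+s))))))
        = (X * X) * ((p:ℂ)^(-α) * ((p:ℂ)^(-β) *
            ((p:ℂ)^(-γ) * ((p:ℂ)^(-δ) * ((p:ℂ)^(-(1+s)) * (p:ℂ)^(-(1+s))))))) by ring]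
    have hXX : ‖X * X‖ ≤ 1 := by
      rw [norm_mul]
      nlinarith [norm_nonneg X]
    have hz6 : ‖(p:ℂ)^(-α) * ((p:ℂ)^(-β) *
        ((p:ℂ)^(-γ) * ((p:ℂ)^(-δ) * ((p:ℂ)^(-(1+s)) * (p:ℂ)^(-(1+s))))))‖
        = (p : ℝ) ^ ((-α).re + ((-β).re + ((-γ).re + ((-δ).re
            + ((-(1+s)).re + (-(1+s)).re))))) := by
      rw [norm_mul, norm_mul, norm_mul, norm_mul, norm_mul, hnP, hnP, hnP, hnP, hnP,
        ← Real.rpow_add ppos, ← Real.rpow_add ppos, ← Real.rpow_add ppos,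
        ← Real.rpow_add ppos, ← Real.rpow_add ppos]
    refine pbgen hp1 hXX hz6 ?_
    rw [hre]; simp only [neg_re]; linarith
  -- term rewriting
  have termEq : ∀ (m' : ℕ) (j : ℕ),
      X ^ j * sigmaab α β (p ^ j) * sigmaab γ δ (p ^ (m' + j)) * (p : ℂ) ^ (-((j : ℂ) * (1 + s)))
      = (∑ i ∈ Finset.range (j + 1), ((p:ℂ)^(-α)) ^ (j - i) * ((p:ℂ)^(-β)) ^ i) *
        ((((p:ℂ)^(-γ)) ^ (m' + j + 1) - ((p:ℂ)^(-δ)) ^ (m' + j + 1))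
          / ((p:ℂ)^(-γ) - (p:ℂ)^(-δ))) *
        (X * (p:ℂ)^(-(1+s))) ^ j := by
    intro m' j
    rw [sigmaab_prime_pow hp, sigmaab_prime_pow hp, geom_closed hcd (m' + j),
      show -((j : ℂ) * (1 + s)) = (j : ℂ) * (-(1 + s)) by ring, Complex.cpow_nat_mul, mul_pow]
    ring
  have termEq0 : ∀ j : ℕ,
      X ^ j * sigmaab α β (p ^ j) * sigmaab γ δ (p ^ j) * (p : ℂ) ^ (-((j : ℂ) * (1 + s)))
      = (∑ i ∈ Finset.range (j + 1), ((p:ℂ)^(-α)) ^ (j - i) * ((p:ℂ)^(-β)) ^ i) *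
        ((((p:ℂ)^(-γ)) ^ (j + 1) - ((p:ℂ)^(-δ)) ^ (j + 1)) / ((p:ℂ)^(-γ) - (p:ℂ)^(-δ))) *
        (X * (p:ℂ)^(-(1+s))) ^ j := by
    intro j
    have := termEq 0 j
    rwa [Nat.zero_add] at this
  obtain ⟨Sm, Tm⟩ := key_sum hcd h1 h2 h3 h4 m
  obtain ⟨S0, T0⟩ := key_sum hcd h1 h2 h3 h4 0
  simp only [Nat.zero_add] at S0 T0
  refine ⟨(summable_congr (termEq m)).mpr Sm, (summable_congr termEq0).mpr S0, ?_, ?_⟩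
  · rw [tsum_congr termEq0, T0]
    exact Dalt hcd h1 h2 h3 h4 h5
  · rw [tsum_congr (termEq m), tsum_congr termEq0, Tm, T0,
      final_alg hcd h1 h2 h3 h4 h5 m]
    rw [show -γ * ((m : ℂ) + 1) = ((m + 1 : ℕ) : ℂ) * (-γ) by push_cast; ring,
      show -δ * ((m : ℂ) + 1) = ((m + 1 : ℕ) : ℂ) * (-δ) by push_cast; ring,
      show -γ * (m : ℂ) = (m : ℂ) * (-γ) by ring,
      show -δ * (m : ℂ) = (m : ℂ) * (-δ) by ring,
      show (-γ - δ : ℂ) = -γ + -δ by ring,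
      show (-δ - γ * (m : ℂ) : ℂ) = -δ + (m : ℂ) * (-γ) by ring,
      show (-γ - δ * (m : ℂ) : ℂ) = -γ + (m : ℂ) * (-δ) by ring,
      show (-α - β - γ - δ : ℂ) = -α + (-β + (-γ + -δ)) by ring,
      show (-(2 * s) : ℂ) = ((2 : ℕ) : ℂ) * (-s) by push_cast; ring,
      show (-2 - α - β - γ - δ - 2 * s : ℂ)
        = -α + (-β + (-γ + (-δ + ((-1 : ℂ) + (-1 : ℂ) + ((2 : ℕ) : ℂ) * (-s))))) by
          push_cast; ring,
      show (-(1 + s) : ℂ) = (-1 : ℂ) + -s by ring,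
      show (-2 : ℂ) = (-1 : ℂ) + (-1 : ℂ) by norm_num]
    simp only [Complex.cpow_add _ _ hP, Complex.cpow_nat_mul]
    congr 1 <;> ring

/-- explicit Euler-product formula for `B′_{α,β,γ,δ,h}(s,χ)`
(Proposition 12 of the paper). -/
theorem statement_16 (q : ℕ) [NeZero q] (χ : DirichletCharacter ℂ q) (hχ : χ.IsPrimitive)
    (h : ℕ) (hh : 0 < h) (α β γ δ s : ℂ)
    (hα : |α.re| < 1 / 4) (hβ : |β.re| < 1 / 4) (hγ : |γ.re| < 1 / 4) (hδ : |δ.re| < 1 / 4)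
    (hs : -(1 / 2 : ℝ) < s.re)
    (hnd : ∀ p : ℕ, p.Prime → p ∣ h → (p : ℂ) ^ γ ≠ (p : ℂ) ^ δ) :
    (∀ p ∈ h.primeFactors,
      Summable (fun j : ℕ => (χ (p : ZMod q)) ^ j * sigmaab α β (p ^ j) *
        sigmaab γ δ (p ^ (h.factorization p + j)) * (p : ℂ) ^ (-((j : ℂ) * (1 + s)))) ∧
      Summable (fun j : ℕ => (χ (p : ZMod q)) ^ j * sigmaab α β (p ^ j) *
        sigmaab γ δ (p ^ j) * (p : ℂ) ^ (-((j : ℂ) * (1 + s)))) ∧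
      (∑' j : ℕ, (χ (p : ZMod q)) ^ j * sigmaab α β (p ^ j) * sigmaab γ δ (p ^ j) *
        (p : ℂ) ^ (-((j : ℂ) * (1 + s)))) ≠ 0) ∧
    B'h χ α β γ δ h s
      = ∏ p ∈ h.primeFactors,
          (let m : ℕ := h.factorization p
           (((p : ℂ) ^ (-γ * ((m : ℂ) + 1)) - (p : ℂ) ^ (-δ * ((m : ℂ) + 1)))
            - (p : ℂ) ^ (-1 : ℂ) *
              (χ (p : ZMod q) * (p : ℂ) ^ (-γ - δ) * ((p : ℂ) ^ (-α) + (p : ℂ) ^ (-β)) *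
                ((p : ℂ) ^ (-γ * (m : ℂ)) - (p : ℂ) ^ (-δ * (m : ℂ))) * (p : ℂ) ^ (-s))
            + (p : ℂ) ^ (-2 : ℂ) *
              (χ (p : ZMod q) ^ 2 * (p : ℂ) ^ (-α - β - γ - δ) *
                ((p : ℂ) ^ (-δ - γ * (m : ℂ)) - (p : ℂ) ^ (-γ - δ * (m : ℂ))) *
                (p : ℂ) ^ (-(2 * s)))) /
           (((p : ℂ) ^ (-γ) - (p : ℂ) ^ (-δ)) *
            (1 - χ (p : ZMod q) ^ 2 * (p : ℂ) ^ (-2 - α - β - γ - δ - 2 * s)))) := by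
  constructor
  · intro p hp
    have hpp : p.Prime := Nat.prime_of_mem_primeFactors hp
    have hdvd : p ∣ h := Nat.dvd_of_mem_primeFactors hp
    obtain ⟨S1, S2, hne, -⟩ := master χ hpp hα hβ hγ hδ hs (hnd p hpp hdvd) (h.factorization p)
    exact ⟨S1, S2, hne⟩
  · unfold B'h
    refine Finset.prod_congr rfl fun p hp => ?_
    have hpp : p.Prime := Nat.prime_of_mem_primeFactors hp
    have hdvd : p ∣ h := Nat.dvd_of_mem_primeFactors hp
    obtain ⟨-, -, -, hEq⟩ := master χ hpp hα hβ hγ hδ hs (hnd p hpp hdvd) (h.factorization p)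
    exact hEq
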